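/- arXiv:1509.05599 — 4 statements merged into one kernel-verified Lean document; each statement's English description precedes it below -/
import Mathlib

section
/- Let K be a commutative ring and (𝔖^•, ∘_k) a PreLie-system over K. On the direct sum ⊕_n 𝔖^n, define a bilinear bracket by {f,g} := Σ_{k=1}^{n} f ∘_k g for homogeneous f ∈ 𝔖^n and homogeneous g, extended bilinearly. Then {-,-} satisfies the PreLie identity {{f,g},h} − {f,{g,h}} = {{f,h},g} − {f,{h,g}} for all f,g,h ∈ ⊕_n 𝔖^n. -/
/-!
Expand `{{f,g},h}` for homogeneous `f ∈ 𝔖ⁿ`, `g ∈ 𝔖ᵐ`: in `(f ∘_k g) ∘_j h` the element `h`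
lands inside `g` (`k ≤ j < k + m`), to the left of `g` (`j < k`) or to the right of `g`
(`j ≥ k + m`). By axiom (i) the first kind of terms add up to `{f,{g,h}}`; by axiom (ii) the
third kind are the terms `(f ∘_v h) ∘_u g`, `u < v`, i.e. the second kind with `g` and `h`
exchanged. Hence the associator `{{f,g},h} - {f,{g,h}}` is symmetric in `g` and `h`.
-/

open DirectSum Finset

namespace LinearMap

variable {K M : Type*} [CommSemiring K] [AddCommGroup M] [Module K M]

def associator (B : M →ₗ[K] M →ₗ[K] M) : M →ₗ[K] M →ₗ[K] M →ₗ[K] M :=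
  B.compr₂ B - (llcomp K M M M ∘ₗ B).compl₂ B

@[simp]
theorem associator_apply (B : M →ₗ[K] M →ₗ[K] M) (f g h : M) :
    B.associator f g h = B (B f g) h - B f (B g h) :=
  rfl

end LinearMap

theorem DirectSum.associator_comm_of_homogeneous {K ι : Type*} [CommSemiring K] [DecidableEq ι]
    {S : ι → Type*} [∀ i, AddCommGroup (S i)] [∀ i, Module K (S i)]
    (B : (⨁ i, S i) →ₗ[K] (⨁ i, S i) →ₗ[K] (⨁ i, S i))
    (H : ∀ i j k (x : S i) (y : S j) (z : S k),
      B.associator (of S i x) (of S j y) (of S k z)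
        = B.associator (of S i x) (of S k z) (of S j y))
    (f g h : ⨁ i, S i) :
    B.associator f g h = B.associator f h g := by
  have hflip : LinearMap.lflip.toLinearMap ∘ₗ B.associator = B.associator := by
    ext i x j y k z : 6
    simpa [DirectSum.lof_eq_of] using (H i j k x y z).symm
  simpa using congr($hflip f h g)

theorem Finset.sum_Icc_eq_sum_Ico_add_sum_Ico_add_sum_Ico {M : Type*} [AddCommMonoid M]
    (F : ℕ → M) {k n : ℕ} (m : ℕ) (hk : 1 ≤ k) (hkn : k ≤ n) :
    ∑ j ∈ Icc 1 (n + m - 1), F j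
      = ∑ j ∈ Ico 1 k, F j + ∑ j ∈ Ico k (k + m), F j
        + ∑ j ∈ Ico (k + m) (n + m), F j := by
  rw [sum_Ico_consecutive F hk (by omega), sum_Ico_consecutive F (by omega) (by omega),
    ← Ico_add_one_right_eq_Icc, Nat.sub_add_cancel (by omega)]

namespace PreLieSystem

section AddCommMonoid

variable {K : Type*} [CommSemiring K] {S : ℕ → Type*}
  [∀ n, AddCommMonoid (S n)] [∀ n, Module K (S n)]
  (comp : ∀ n m : ℕ, ℕ → S n →ₗ[K] S m →ₗ[K] S (n + m - 1))

def Sequential : Prop :=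
  ∀ (n m l u v : ℕ), 1 ≤ u → u ≤ n → 1 ≤ v → v ≤ m → ∀ (f : S n) (g : S m) (h : S l),
    HEq (comp n (m + l - 1) u f (comp m l v g h))
      (comp (n + m - 1) l (u + v - 1) (comp n m u f g) h)

def Parallel : Prop :=
  ∀ (n m l u v : ℕ), 1 ≤ u → u < v → v ≤ n → ∀ (f : S n) (g : S m) (h : S l),
    HEq (comp (n + m - 1) l (v + m - 1) (comp n m u f g) h)
      (comp (n + l - 1) m u (comp n l v f h) g)

def IsBracket (B : (⨁ n, S n) →ₗ[K] (⨁ n, S n) →ₗ[K] (⨁ n, S n)) : Prop :=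
  ∀ (n m : ℕ) (f : S n) (g : S m),
    B (of S n f) (of S m g) = ∑ k ∈ Icc 1 n, of S (n + m - 1) (comp n m k f g)

def leftInsertions {n m l : ℕ} (f : S n) (g : S m) (h : S l) : ⨁ n, S n :=
  ∑ v ∈ Icc 1 n, ∑ u ∈ Ico 1 v, of S _ (comp (n + m - 1) l u (comp n m v f g) h)

variable {comp}

theorem sum_of_comp_comp_inside (hseq : Sequential comp) {n m l k : ℕ} (hk : 1 ≤ k)
    (hkn : k ≤ n) (f : S n) (g : S m) (h : S l) :
    ∑ j ∈ Ico k (k + m), of S _ (comp (n + m - 1) l j (comp n m k f g) h)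
      = ∑ v ∈ Icc 1 m, of S _ (comp n (m + l - 1) k f (comp m l v g h)) := by
  refine sum_nbij' (fun j => j + 1 - k) (fun v => v + k - 1) ?_ ?_ ?_ ?_ fun j hj => ?_
  iterate 4 (intro j hj; simp only [mem_Ico, mem_Icc] at hj ⊢; omega)
  rw [mem_Ico] at hj
  have hj' := hseq n m l k (j + 1 - k) hk hkn (by omega) (by omega) f g h
  rw [show k + (j + 1 - k) - 1 = j by omega] at hj'
  exact of_eq_of_gradedMonoid_eq (Sigma.mk.inj_iff.mpr ⟨by omega, hj'.symm⟩)

theorem sum_of_comp_comp_right (hpar : Parallel comp) {n m l k : ℕ} (hk : 1 ≤ k)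
    (f : S n) (g : S m) (h : S l) :
    ∑ j ∈ Ico (k + m) (n + m), of S _ (comp (n + m - 1) l j (comp n m k f g) h)
      = ∑ v ∈ Ioc k n, of S _ (comp (n + l - 1) m k (comp n l v f h) g) := by
  refine sum_nbij' (fun j => j + 1 - m) (fun v => v + m - 1) ?_ ?_ ?_ ?_ fun j hj => ?_
  iterate 4 (intro j hj; simp only [mem_Ico, mem_Ioc] at hj ⊢; omega)
  rw [mem_Ico] at hj
  have hj' := hpar n m l k (j + 1 - m) hk (by omega) (by omega) f g h
  rw [show j + 1 - m + m - 1 = j by omega] at hj'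
  exact of_eq_of_gradedMonoid_eq (Sigma.mk.inj_iff.mpr ⟨by omega, hj'⟩)

theorem bracket_bracket_of {B : (⨁ n, S n) →ₗ[K] (⨁ n, S n) →ₗ[K] (⨁ n, S n)}
    (hseq : Sequential comp) (hpar : Parallel comp) (hB : IsBracket comp B)
    {n m l : ℕ} (f : S n) (g : S m) (h : S l) :
    B (B (of S n f) (of S m g)) (of S l h)
      = B (of S n f) (B (of S m g) (of S l h))
        + leftInsertions comp f g h + leftInsertions comp f h g := by
  have hfg_h : B (B (of S n f) (of S m g)) (of S l h)
      = ∑ k ∈ Icc 1 n, ∑ j ∈ Icc 1 (n + m - 1),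
          of S _ (comp (n + m - 1) l j (comp n m k f g) h) := by
    rw [hB, map_sum, LinearMap.sum_apply]
    exact sum_congr rfl fun k _ => hB _ _ _ _
  have hf_gh : B (of S n f) (B (of S m g) (of S l h))
      = ∑ k ∈ Icc 1 n, ∑ v ∈ Icc 1 m, of S _ (comp n (m + l - 1) k f (comp m l v g h)) := by
    rw [hB, map_sum, sum_comm]
    exact sum_congr rfl fun v _ => hB _ _ _ _
  have hright : ∑ k ∈ Icc 1 n, ∑ v ∈ Ioc k n,
        of S _ (comp (n + l - 1) m k (comp n l v f h) g)
      = leftInsertions comp f h g :=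
    sum_comm' fun k v => by simp only [mem_Icc, mem_Ioc, mem_Ico]; omega
  rw [hfg_h, hf_gh, ← hright, leftInsertions]
  simp only [← sum_add_distrib]
  refine sum_congr rfl fun k hk => ?_
  rw [mem_Icc] at hk
  rw [sum_Icc_eq_sum_Ico_add_sum_Ico_add_sum_Ico _ m hk.1 hk.2,
    sum_of_comp_comp_inside hseq hk.1 hk.2, sum_of_comp_comp_right hpar hk.1,
    add_comm (∑ j ∈ Ico 1 k, _)]

end AddCommMonoid

theorem associator_of_of_of_comm {K : Type*} [CommRing K] {S : ℕ → Type*}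
    [∀ n, AddCommGroup (S n)] [∀ n, Module K (S n)]
    {comp : ∀ n m : ℕ, ℕ → S n →ₗ[K] S m →ₗ[K] S (n + m - 1)}
    {B : (⨁ n, S n) →ₗ[K] (⨁ n, S n) →ₗ[K] (⨁ n, S n)}
    (hseq : Sequential comp) (hpar : Parallel comp) (hB : IsBracket comp B)
    {n m l : ℕ} (f : S n) (g : S m) (h : S l) :
    B.associator (of S n f) (of S m g) (of S l h)
      = B.associator (of S n f) (of S l h) (of S m g) := by
  simp only [LinearMap.associator_apply, bracket_bracket_of hseq hpar hB]
  abel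

end PreLieSystem

/-- For a PreLie-system `(𝔖^•, ∘_k)` over a commutative ring `K`,
the bracket `{f,g} = Σ_{k=1}^n f ∘_k g` (for homogeneous `f ∈ 𝔖^n`), extended
bilinearly to the direct sum `⊕_n 𝔖^n`, satisfies the PreLie identity. -/
theorem stmt_5 (K : Type*) [CommRing K] (S : ℕ → Type*)
    [∀ n, AddCommGroup (S n)] [∀ n, Module K (S n)]
    (comp : ∀ n m : ℕ, ℕ → S n →ₗ[K] S m →ₗ[K] S (n + m - 1))
    (hax1 : ∀ (n m l u v : ℕ), 1 ≤ u → u ≤ n → 1 ≤ v → v ≤ m →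
      ∀ (f : S n) (g : S m) (h : S l),
        HEq (comp n (m + l - 1) u f (comp m l v g h))
            (comp (n + m - 1) l (u + v - 1) (comp n m u f g) h))
    (hax2 : ∀ (n m l u v : ℕ), 1 ≤ u → u < v → v ≤ n →
      ∀ (f : S n) (g : S m) (h : S l),
        HEq (comp (n + m - 1) l (v + m - 1) (comp n m u f g) h)
            (comp (n + l - 1) m u (comp n l v f h) g))
    (B : (⨁ n, S n) →ₗ[K] (⨁ n, S n) →ₗ[K] (⨁ n, S n))
    (hB : ∀ (n m : ℕ) (f : S n) (g : S m),
      B (DirectSum.of S n f) (DirectSum.of S m g)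
        = ∑ k ∈ Finset.Icc 1 n, DirectSum.of S (n + m - 1) (comp n m k f g)) :
    ∀ f g h : ⨁ n, S n,
      B (B f g) h - B f (B g h) = B (B f h) g - B f (B h g) :=
  DirectSum.associator_comm_of_homogeneous B fun _ _ _ =>
    PreLieSystem.associator_of_of_of_comm hax1 hax2 hB
end

section
/- Let K be a commutative ring, A a K-module, and for each n let C^n := the K-module of n-multilinear maps A^n → A. For f ∈ C^m, g ∈ C^n and 1 ≤ i ≤ m, define the insertion f ∘_i g ∈ C^{m+n−1} by (f ∘_i g)(x_1,…,x_{m+n−1}) = f(x_1,…,x_{i−1}, g(x_i,…,x_{i+n−1}), x_{i+n},…,x_{m+n−1}). Then these insertions satisfy the PreLie-system axioms: f ∘_u (g ∘_v h) = (f ∘_u g) ∘_{u+v−1} h for all 1 ≤ u ≤ m, 1 ≤ v ≤ n, and (f ∘_u g) ∘_{v+n−1} h = (f ∘_v h) ∘_u g for all 1 ≤ u < v ≤ m, where f ∈ C^m, g ∈ C^n, h ∈ C^l. -/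
/-- Insertion `f ∘_i g` of an `n`-ary operation `g` into the `i`-th input
(1-indexed) of an `m`-ary operation `f`, defined on underlying functions. -/
def ins {A : Type*} [Zero A] (m n : ℕ) (f : (Fin m → A) → A) (g : (Fin n → A) → A)
    (i : ℕ) (x : Fin (m + n - 1) → A) : A :=
  let x' : ℕ → A := fun t => if h : t < m + n - 1 then x ⟨t, h⟩ else 0
  f fun j =>
    if (j : ℕ) + 1 < i then x' (j : ℕ)
    else if (j : ℕ) + 1 = i then g fun k => x' (i - 1 + (k : ℕ))
    else x' ((j : ℕ) + n - 1)

set_option maxHeartbeats 20000000 in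
set_option linter.unreachableTactic false in
set_option linter.unusedTactic false in
/-- the insertion operations on multilinear maps `C^n = {A^n → A}`
satisfy the PreLie-system axioms. -/
theorem stmt_6 (K A : Type*) [CommRing K] [AddCommGroup A] [Module K A]
    (m n l : ℕ)
    (f : MultilinearMap K (fun _ : Fin m => A) A)
    (g : MultilinearMap K (fun _ : Fin n => A) A)
    (h : MultilinearMap K (fun _ : Fin l => A) A) :
    (∀ u v : ℕ, 1 ≤ u → u ≤ m → 1 ≤ v → v ≤ n →
      ∀ (e : (m + n - 1) + l - 1 = m + (n + l - 1) - 1)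
        (x : Fin (m + (n + l - 1) - 1) → A),
        ins m (n + l - 1) ⇑f (ins n l ⇑g ⇑h v) u x =
          ins (m + n - 1) l (ins m n ⇑f ⇑g u) ⇑h (u + v - 1)
            (fun j => x (Fin.cast e j))) ∧
    (∀ u v : ℕ, 1 ≤ u → u < v → v ≤ m →
      ∀ (e : (m + l - 1) + n - 1 = (m + n - 1) + l - 1)
        (x : Fin ((m + n - 1) + l - 1) → A),
        ins (m + n - 1) l (ins m n ⇑f ⇑g u) ⇑h (v + n - 1) x =
          ins (m + l - 1) n (ins m l ⇑f ⇑h v) ⇑g u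
            (fun j => x (Fin.cast e j))) := by
  constructor
  · intro u v hu1 hum hv1 hvn e x
    simp only [ins]
    congr 1
    funext j
    have hj := j.isLt
    split_ifs <;>
      first
      | rfl
      | (exfalso; omega)
      | (refine congrArg x (Fin.ext ?_); simp only [Fin.coe_cast]; omega)
      | (refine congrArg _ (funext fun k => ?_); have hk := k.isLt; split_ifs <;>
          first
          | rfl
          | (exfalso; omega)
          | (refine congrArg x (Fin.ext ?_); simp only [Fin.coe_cast]; omega)
          | (refine congrArg _ (funext fun k2 => ?_); have hk2 := k2.isLt; split_ifs <;>
              first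
              | rfl
              | (exfalso; omega)
              | (refine congrArg x (Fin.ext ?_); simp only [Fin.coe_cast]; omega)))
  · intro u v hu1 huv hvm e x
    simp only [ins]
    congr 1
    funext j
    have hj := j.isLt
    split_ifs <;>
      first
      | rfl
      | (exfalso; omega)
      | (refine congrArg x (Fin.ext ?_); simp only [Fin.coe_cast]; omega)
      | (refine congrArg _ (funext fun k => ?_); have hk := k.isLt; split_ifs <;>
          first
          | rfl
          | (exfalso; omega)
          | (refine congrArg x (Fin.ext ?_); simp only [Fin.coe_cast]; omega)
          | (refine congrArg _ (funext fun k2 => ?_); have hk2 := k2.isLt; split_ifs <;>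
              first
              | rfl
              | (exfalso; omega)
              | (refine congrArg x (Fin.ext ?_); simp only [Fin.coe_cast]; omega)))
end

section
/- Let K be a commutative ring and A a K-module. On the direct sum ⊕_n C^n of the modules C^n of n-multilinear maps A^n → A, define for homogeneous f ∈ C^m and g ∈ C^n the bracket {f,g} := Σ_{i=1}^{m} f ∘_i g, where f ∘_i g denotes insertion of g into the i-th input of f, extended bilinearly. Then {-,-} satisfies the PreLie identity {{f,g},h} − {f,{g,h}} = {{f,h},g} − {f,{h,g}}. -/
open DirectSum

/-!
In `{{f,g},h} = Σ_a Σ_q (f ∘_a g) ∘_q h`, the positions `q` inside the block of `g` give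
`f ∘_a (g ∘_j h)`, i.e. exactly the terms of `{f,{g,h}}`. The remaining positions insert `g`
and `h` into two distinct inputs `a ≠ b` of `f`, and that part is symmetric in `g` and `h`,
so the associator `{{f,g},h} - {f,{g,h}}` is symmetric in `g` and `h`.

To avoid casts between `Fin` types of different lengths, operations are evaluated on
`ℕ`-indexed inputs, where both composition laws are pointwise identities.
-/

open Finset

section InsNat
variable {A : Type*}

/-- `F ∘_i G` on `ℕ`-indexed inputs, for `G` of arity `n`; the arity of `F` plays no role. -/
def insNat (n : ℕ) (F G : (ℕ → A) → A) (i : ℕ) (y : ℕ → A) : A :=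
  F fun t => if t + 1 < i then y t else if t + 1 = i then G (fun k => y (i - 1 + k))
    else y (t + n - 1)

def DependsOnFirst (n : ℕ) (F : (ℕ → A) → A) : Prop :=
  ∀ ⦃y y' : ℕ → A⦄, (∀ k < n, y k = y' k) → F y = F y'

theorem DependsOnFirst.insNat {m n : ℕ} {F G : (ℕ → A) → A} (hF : DependsOnFirst m F)
    (hG : DependsOnFirst n G) {i : ℕ} (hi : 1 ≤ i) (him : i ≤ m) :
    DependsOnFirst (m + n - 1) (insNat n F G i) := by
  intro y y' hy
  refine hF fun t ht => ?_
  split_ifs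
  · exact hy t (by omega)
  · exact hG fun k hk => hy _ (by omega)
  · exact hy _ (by omega)

theorem insNat_assoc {n p : ℕ} (F G H : (ℕ → A) → A) {i j : ℕ} (hi : 1 ≤ i)
    (hj : 1 ≤ j) (hjn : j ≤ n) :
    insNat p (insNat n F G i) H (i + j - 1) = insNat (n + p - 1) F (insNat p G H j) i := by
  funext y
  simp only [insNat]
  congr 1
  funext t
  split_ifs <;> try (exfalso; omega)
  · rfl
  · congr 1
    funext k
    split_ifs <;>
      first | (exfalso; omega) | rfl | (congr 1; omega) | (congr 1; funext l; congr 1; omega)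
  · congr 1; omega

theorem insNat_comm_of_lt {n p : ℕ} (F : (ℕ → A) → A) {G : (ℕ → A) → A}
    (hG : DependsOnFirst n G) (H : (ℕ → A) → A) {a b : ℕ} (ha : 1 ≤ a) (hab : a < b) :
    insNat p (insNat n F G a) H (b + n - 1) = insNat n (insNat p F H b) G a := by
  funext y
  simp only [insNat]
  congr 1
  funext t
  split_ifs <;> try (exfalso; omega)
  · rfl
  · exact hG fun k hk => if_pos (by omega)
  · rfl
  · congr 1
    funext l
    rw [if_neg (by omega), if_neg (by omega)]
    congr 1; omega
  · congr 1; omega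

def onNat {m : ℕ} (f : (Fin m → A) → A) : (ℕ → A) → A := fun y => f fun t => y t

theorem dependsOnFirst_onNat {m : ℕ} (f : (Fin m → A) → A) : DependsOnFirst m (onNat f) :=
  fun _ _ hy => congrArg f (funext fun t => hy t t.isLt)

theorem onNat_ins [Zero A] {m n : ℕ} (f : (Fin m → A) → A) (g : (Fin n → A) → A) {i : ℕ}
    (hi : 1 ≤ i) (him : i ≤ m) :
    onNat (ins m n f g i) = insNat n (onNat f) (onNat g) i := by
  funext y
  -- `ins` is `insNat` applied to the zero-padded input
  show insNat n (onNat f) (onNat g) i (fun t => if h : t < m + n - 1 then y t else 0) = _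
  exact ((dependsOnFirst_onNat f).insNat (dependsOnFirst_onNat g) hi him) fun k hk => by
    simp [hk]

end InsNat

-- `if b < i then b else b + n - 1` is the position in `f ∘_i g` of the `b`-th input of `f`.
theorem sum_Icc_eq_sum_block_add_sum_erase {M : Type*} [AddCommMonoid M] (T : ℕ → M)
    {m n i : ℕ} (hi : 1 ≤ i) (him : i ≤ m) :
    ∑ q ∈ Icc 1 (m + n - 1), T q =
      ∑ j ∈ Icc 1 n, T (i + j - 1) +
        ∑ b ∈ (Icc 1 m).erase i, T (if b < i then b else b + n - 1) := by
  have hblock : Icc i (i + n - 1) ⊆ Icc 1 (m + n - 1) := fun q hq => by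
    simp only [mem_Icc] at hq ⊢; omega
  rw [← sum_sdiff hblock, add_comm]
  congr 1
  · refine sum_nbij' (fun q => q - i + 1) (fun j => i + j - 1) ?_ ?_ ?_ ?_ ?_ <;>
      simp only [mem_Icc] <;> intro q hq
    any_goals omega
    exact congrArg T (by omega)
  · refine sum_nbij' (fun q => if q < i then q else q - n + 1)
      (fun b => if b < i then b else b + n - 1) ?_ ?_ ?_ ?_ ?_ <;>
      simp only [mem_sdiff, mem_erase, mem_Icc] <;> intro q hq <;> split_ifs
    any_goals omega
    all_goals exact congrArg T (by omega)

section Bracket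
variable {K A : Type*} [CommSemiring K] [AddCommMonoid A] [Module K A]

local notation "𝓒[" n "]" => MultilinearMap K (fun _ : Fin n => A) A
local notation "𝓒" => fun k : ℕ => 𝓒[k]

theorem of_eq_of_onNat_eq {q q' : ℕ} (hq : q = q') (c : 𝓒[q]) (c' : 𝓒[q'])
    (h : onNat ⇑c = onNat ⇑c') : of 𝓒 q c = of 𝓒 q' c' := by
  subst hq
  congr 1
  ext x
  simpa [onNat] using congrFun h fun t => if ht : t < q then x ⟨t, ht⟩ else 0

def IsInsertion (comp : ∀ m n : ℕ, 𝓒[m] → 𝓒[n] → ℕ → 𝓒[m + n - 1]) : Prop :=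
  ∀ (m n : ℕ) (f : 𝓒[m]) (g : 𝓒[n]) (i : ℕ), 1 ≤ i → i ≤ m →
    ∀ x, comp m n f g i x = ins m n ⇑f ⇑g i x

variable {comp : ∀ m n : ℕ, MultilinearMap K (fun _ : Fin m => A) A →
  MultilinearMap K (fun _ : Fin n => A) A → ℕ →
  MultilinearMap K (fun _ : Fin (m + n - 1) => A) A}

theorem IsInsertion.onNat_comp (hcomp : IsInsertion comp) {m n : ℕ} (f : 𝓒[m]) (g : 𝓒[n])
    {i : ℕ} (hi : 1 ≤ i) (him : i ≤ m) :
    onNat ⇑(comp m n f g i) = insNat n (onNat ⇑f) (onNat ⇑g) i := by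
  rw [← onNat_ins _ _ hi him]
  exact congrArg onNat (funext (hcomp m n f g i hi him))

theorem IsInsertion.of_comp_comp_assoc (hcomp : IsInsertion comp) {m n p : ℕ}
    (f : 𝓒[m]) (g : 𝓒[n]) (h : 𝓒[p]) {i j : ℕ} (hi : 1 ≤ i) (him : i ≤ m) (hj : 1 ≤ j)
    (hjn : j ≤ n) :
    of 𝓒 (m + n - 1 + p - 1) (comp (m + n - 1) p (comp m n f g i) h (i + j - 1)) =
      of 𝓒 (m + (n + p - 1) - 1) (comp m (n + p - 1) f (comp n p g h j) i) := by
  refine of_eq_of_onNat_eq (by omega) _ _ ?_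
  rw [hcomp.onNat_comp _ _ (by omega) (by omega), hcomp.onNat_comp _ _ hi him,
    hcomp.onNat_comp _ _ hi him, hcomp.onNat_comp _ _ hj hjn]
  exact insNat_assoc _ _ _ hi hj hjn

theorem IsInsertion.of_comp_comp_comm_of_lt (hcomp : IsInsertion comp) {m n p : ℕ}
    (f : 𝓒[m]) (g : 𝓒[n]) (h : 𝓒[p]) {a b : ℕ} (ha : 1 ≤ a) (hab : a < b) (hbm : b ≤ m) :
    of 𝓒 (m + n - 1 + p - 1) (comp (m + n - 1) p (comp m n f g a) h (b + n - 1)) =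
      of 𝓒 (m + p - 1 + n - 1) (comp (m + p - 1) n (comp m p f h b) g a) := by
  refine of_eq_of_onNat_eq (by omega) _ _ ?_
  rw [hcomp.onNat_comp _ _ (by omega) (by omega), hcomp.onNat_comp _ _ ha (by omega),
    hcomp.onNat_comp _ _ ha (by omega), hcomp.onNat_comp _ _ (by omega) hbm]
  exact insNat_comm_of_lt _ (dependsOnFirst_onNat _) _ ha hab

theorem IsInsertion.of_comp_comp_comm (hcomp : IsInsertion comp) {m n p : ℕ}
    (f : 𝓒[m]) (g : 𝓒[n]) (h : 𝓒[p]) {a b : ℕ} (ha : 1 ≤ a) (ham : a ≤ m) (hb : 1 ≤ b)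
    (hbm : b ≤ m) (hab : a ≠ b) :
    of 𝓒 (m + n - 1 + p - 1)
        (comp (m + n - 1) p (comp m n f g a) h (if b < a then b else b + n - 1)) =
      of 𝓒 (m + p - 1 + n - 1)
        (comp (m + p - 1) n (comp m p f h b) g (if a < b then a else a + p - 1)) := by
  rcases hab.lt_or_gt with hab | hba
  · rw [if_neg hab.not_gt, if_pos hab]
    exact hcomp.of_comp_comp_comm_of_lt f g h ha hab hbm
  · rw [if_pos hba, if_neg hba.not_gt]
    exact (hcomp.of_comp_comp_comm_of_lt f h g hb hba ham).symm

theorem IsInsertion.sum_sum_erase_comm (hcomp : IsInsertion comp) {m n p : ℕ}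
    (f : 𝓒[m]) (g : 𝓒[n]) (h : 𝓒[p]) :
    ∑ a ∈ Icc 1 m, ∑ b ∈ (Icc 1 m).erase a, of 𝓒 (m + n - 1 + p - 1)
        (comp (m + n - 1) p (comp m n f g a) h (if b < a then b else b + n - 1)) =
      ∑ a ∈ Icc 1 m, ∑ b ∈ (Icc 1 m).erase a, of 𝓒 (m + p - 1 + n - 1)
        (comp (m + p - 1) n (comp m p f h a) g (if b < a then b else b + p - 1)) := by
  rw [sum_comm' (t' := Icc 1 m) (s' := fun b => (Icc 1 m).erase b) fun a b => by
    simp only [mem_erase, mem_Icc]; omega]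
  refine sum_congr rfl fun b hb => sum_congr rfl fun a ha => ?_
  obtain ⟨hab, ha, ham⟩ := by simpa only [mem_erase, mem_Icc] using ha
  obtain ⟨hb, hbm⟩ := mem_Icc.mp hb
  exact hcomp.of_comp_comp_comm f g h ha ham hb hbm hab

variable (comp) in
def IsInsertionBracket
    (B : (⨁ n, 𝓒[n]) →ₗ[K] (⨁ n, 𝓒[n]) →ₗ[K] (⨁ n, 𝓒[n])) : Prop :=
  ∀ (m n : ℕ) (f : 𝓒[m]) (g : 𝓒[n]),
    B (of 𝓒 m f) (of 𝓒 n g) = of 𝓒 (m + n - 1) (∑ i ∈ Icc 1 m, comp m n f g i)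

variable {B : (⨁ n, MultilinearMap K (fun _ : Fin n => A) A) →ₗ[K]
  (⨁ n, MultilinearMap K (fun _ : Fin n => A) A) →ₗ[K]
  (⨁ n, MultilinearMap K (fun _ : Fin n => A) A)}

theorem IsInsertionBracket.bracket_bracket_of
    (hB : IsInsertionBracket comp B) (hcomp : IsInsertion comp) {m n p : ℕ}
    (f : 𝓒[m]) (g : 𝓒[n]) (h : 𝓒[p]) :
    B (B (of 𝓒 m f) (of 𝓒 n g)) (of 𝓒 p h) =
      B (of 𝓒 m f) (B (of 𝓒 n g) (of 𝓒 p h)) +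
        ∑ a ∈ Icc 1 m, ∑ b ∈ (Icc 1 m).erase a, of 𝓒 (m + n - 1 + p - 1)
          (comp (m + n - 1) p (comp m n f g a) h (if b < a then b else b + n - 1)) := by
  unfold IsInsertionBracket at hB
  simp only [hB, map_sum, LinearMap.coe_sum, Finset.sum_apply]
  rw [sum_comm (s := Icc 1 n), ← sum_add_distrib]
  refine sum_congr rfl fun a ha => ?_
  obtain ⟨ha, ham⟩ := mem_Icc.mp ha
  rw [sum_Icc_eq_sum_block_add_sum_erase _ ha ham]
  congr 1
  exact sum_congr rfl fun j hj =>
    hcomp.of_comp_comp_assoc f g h ha ham (mem_Icc.mp hj).1 (mem_Icc.mp hj).2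

theorem IsInsertionBracket.preLie_of (hB : IsInsertionBracket comp B)
    (hcomp : IsInsertion comp) {m n p : ℕ} (f : 𝓒[m]) (g : 𝓒[n]) (h : 𝓒[p]) :
    B (B (of 𝓒 m f) (of 𝓒 n g)) (of 𝓒 p h) +
        B (of 𝓒 m f) (B (of 𝓒 p h) (of 𝓒 n g)) =
      B (B (of 𝓒 m f) (of 𝓒 p h)) (of 𝓒 n g) +
        B (of 𝓒 m f) (B (of 𝓒 n g) (of 𝓒 p h)) := by
  rw [hB.bracket_bracket_of hcomp, hB.bracket_bracket_of hcomp, hcomp.sum_sum_erase_comm]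
  abel

theorem IsInsertionBracket.preLie (hB : IsInsertionBracket comp B) (hcomp : IsInsertion comp)
    (F G H : ⨁ n, 𝓒[n]) : B (B F G) H + B F (B H G) = B (B F H) G + B F (B G H) := by
  induction F using DirectSum.induction_on with
  | zero => simp
  | add F₁ F₂ ih₁ ih₂ =>
    simp only [map_add, LinearMap.add_apply]
    rw [add_add_add_comm, ih₁, ih₂, add_add_add_comm]
  | of m f => ?_
  induction G using DirectSum.induction_on with
  | zero => simp
  | add G₁ G₂ ih₁ ih₂ =>
    simp only [map_add, LinearMap.add_apply]
    rw [add_add_add_comm, ih₁, ih₂, add_add_add_comm]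
  | of n g => ?_
  induction H using DirectSum.induction_on with
  | zero => simp
  | add H₁ H₂ ih₁ ih₂ =>
    simp only [map_add, LinearMap.add_apply]
    rw [add_add_add_comm, ih₁, ih₂, add_add_add_comm]
  | of p h => exact hB.preLie_of hcomp f g h

end Bracket

/-- on the direct sum `⊕_n C^n` of the modules of multilinear maps
`A^n → A`, the bracket `{f,g} = Σ_{i=1}^m f ∘_i g` (for homogeneous `f ∈ C^m`),
extended bilinearly, satisfies the PreLie identity. -/
theorem stmt_7 (K A : Type*) [CommRing K] [AddCommGroup A] [Module K A]
    (comp : ∀ m n : ℕ, MultilinearMap K (fun _ : Fin m => A) A →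
      MultilinearMap K (fun _ : Fin n => A) A → ℕ →
      MultilinearMap K (fun _ : Fin (m + n - 1) => A) A)
    (hcomp : ∀ (m n : ℕ) (f : MultilinearMap K (fun _ : Fin m => A) A)
        (g : MultilinearMap K (fun _ : Fin n => A) A) (i : ℕ), 1 ≤ i → i ≤ m →
      ∀ x, comp m n f g i x = ins m n ⇑f ⇑g i x)
    (B : (⨁ n, MultilinearMap K (fun _ : Fin n => A) A) →ₗ[K]
         (⨁ n, MultilinearMap K (fun _ : Fin n => A) A) →ₗ[K]
         (⨁ n, MultilinearMap K (fun _ : Fin n => A) A))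
    (hB : ∀ (m n : ℕ) (f : MultilinearMap K (fun _ : Fin m => A) A)
        (g : MultilinearMap K (fun _ : Fin n => A) A),
      B (DirectSum.of (fun k => MultilinearMap K (fun _ : Fin k => A) A) m f)
          (DirectSum.of (fun k => MultilinearMap K (fun _ : Fin k => A) A) n g)
        = DirectSum.of (fun k => MultilinearMap K (fun _ : Fin k => A) A) (m + n - 1)
            (∑ i ∈ Finset.Icc 1 m, comp m n f g i)) :
    ∀ F G H : ⨁ n, MultilinearMap K (fun _ : Fin n => A) A,
      B (B F G) H - B F (B G H) = B (B F H) G - B F (B H G) := fun F G H =>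
  sub_eq_sub_iff_add_eq_add.mpr (IsInsertionBracket.preLie hB hcomp F G H)
end

section
/- Let K be a commutative ring, G a finite group, and X a G-set. Then the module of coinvariants K[X]_G and the module of invariants K[X]^G of the permutation module K[X] are isomorphic as K-modules. -/
/-!
Both modules are free on the set of orbits `X/G`. Pushing forward along `X → X/G` identifies
`K[X]_G` with `K[X/G]`, because the kernel of `K[X] → K[X/G]` is spanned by the differences
`σ • x - x`. On the other side, an invariant function is constant on orbits, and since `G` is
finite every orbit is finite, so pulling back along `X → X/G` identifies `K[X/G]` with `K[X]^G`.
-/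

open MulAction Finsupp

section

variable {K G X : Type*} [CommRing K] [Group G] [MulAction G X]

namespace MulAction

lemma finite_preimage_orbitRel_mk [Finite G] {s : Set (orbitRel.Quotient G X)} (hs : s.Finite) :
    (Quotient.mk (orbitRel G X) ⁻¹' s).Finite :=
  hs.preimage' fun o _ ↦ by
    simpa [Set.preimage, ← orbitRel.Quotient.mem_orbit,
      orbitRel.Quotient.orbit_eq_orbit_out o Quotient.out_eq'] using
      Finite.finite_mulAction_orbit o.out

end MulAction

namespace Finsupp

variable (K) in
noncomputable def comapOrbitRelMk [Finite G] (c : orbitRel.Quotient G X →₀ K) : X →₀ K :=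
  ofSupportFinite (c ∘ Quotient.mk (orbitRel G X)) <| by
    rw [Function.support_comp_eq_preimage]
    exact finite_preimage_orbitRel_mk c.hasFiniteSupport

@[simp]
lemma comapOrbitRelMk_apply [Finite G] (c : orbitRel.Quotient G X →₀ K) (x : X) :
    comapOrbitRelMk K c x = c (Quotient.mk _ x) := rfl

end Finsupp

namespace Representation

lemma coeff_ofMulAction_ofCoeff (σ : G) (f : X →₀ K) :
    (ofMulAction K G X σ (MonoidAlgebra.ofCoeff f)).coeff = mapDomain (σ • ·) f := by
  simp [ofMulAction_def]

lemma mem_invariants_ofMulAction_iff {m : MonoidAlgebra K X} :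
    m ∈ (ofMulAction K G X).invariants ↔ ∀ (σ : G) (x : X), m.coeff (σ • x) = m.coeff x := by
  refine ⟨fun hm σ x ↦ ?_, fun hm σ ↦ ?_⟩
  · simpa using congr($(hm σ⁻¹).coeff x)
  · ext x
    simpa using hm σ⁻¹ x

variable (K G X) in
noncomputable def invariantsOfMulActionEquiv [Finite G] :
    (orbitRel.Quotient G X →₀ K) ≃ₗ[K] (ofMulAction K G X).invariants where
  toFun c := ⟨MonoidAlgebra.ofCoeff (comapOrbitRelMk K c),
    mem_invariants_ofMulAction_iff.2 fun σ x ↦ by simp [orbitRel.Quotient.quotient_smul_eq]⟩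
  invFun m := comapDomain Quotient.out m.1.coeff Quotient.out_injective.injOn
  map_add' c d := by ext; simp
  map_smul' r c := by ext; simp
  left_inv c := by ext; simp
  right_inv m := by
    ext x
    obtain ⟨σ, hσ⟩ : (Quotient.mk (orbitRel G X) x).out ∈ orbit G x :=
      orbitRel_apply.mp (Quotient.mk_out x)
    simp [← hσ, mem_invariants_ofMulAction_iff.1 m.2]

variable (K G X) in
noncomputable abbrev permCoinvariantsKer : Submodule K (X →₀ K) :=
  Submodule.span K
    {m | ∃ (σ : G) (f : X →₀ K), m = (ofMulAction K G X σ (MonoidAlgebra.ofCoeff f)).coeff - f}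

lemma mapDomain_smul_sub_mem_permCoinvariantsKer (σ : G) (f : X →₀ K) :
    mapDomain (σ • ·) f - f ∈ permCoinvariantsKer K G X :=
  Submodule.subset_span ⟨σ, f, by rw [coeff_ofMulAction_ofCoeff]⟩

lemma mapDomain_out_mk_sub_mem_permCoinvariantsKer (f : X →₀ K) :
    mapDomain (Quotient.out ∘ Quotient.mk (orbitRel G X)) f - f ∈ permCoinvariantsKer K G X := by
  induction f using Finsupp.induction with
  | zero => simp
  | single_add x r f _ _ ih =>
    obtain ⟨σ, hσ⟩ : (Quotient.mk (orbitRel G X) x).out ∈ orbit G x :=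
      orbitRel_apply.mp (Quotient.mk_out x)
    have hx := mapDomain_smul_sub_mem_permCoinvariantsKer σ (single x r)
    rw [mapDomain_single, show σ • x = _ from hσ] at hx
    rw [mapDomain_add, mapDomain_single, add_sub_add_comm]
    exact add_mem hx ih

lemma ker_lmapDomain_orbitRel_mk :
    LinearMap.ker (lmapDomain K K (Quotient.mk (orbitRel G X))) = permCoinvariantsKer K G X := by
  refine le_antisymm (fun f hf ↦ ?_) (Submodule.span_le.2 ?_)
  · have hf : mapDomain (Quotient.mk (orbitRel G X)) f = 0 := hf
    have := mapDomain_out_mk_sub_mem_permCoinvariantsKer (G := G) f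
    rwa [mapDomain_comp, hf, mapDomain_zero, zero_sub, neg_mem_iff] at this
  · rintro _ ⟨σ, f, rfl⟩
    simp only [SetLike.mem_coe, LinearMap.mem_ker, map_sub, sub_eq_zero,
      coeff_ofMulAction_ofCoeff, lmapDomain_apply, ← mapDomain_comp]
    congr 1
    funext x
    exact Quotient.sound ⟨σ, rfl⟩

variable (K G X) in
noncomputable def permCoinvariantsEquiv :
    ((X →₀ K) ⧸ permCoinvariantsKer K G X) ≃ₗ[K] (orbitRel.Quotient G X →₀ K) :=
  (Submodule.quotEquivOfEq _ _ ker_lmapDomain_orbitRel_mk.symm).trans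
    (LinearMap.quotKerEquivOfSurjective _ (mapDomain_surjective Quotient.mk_surjective))

end Representation

end

/-- for a finite group `G` acting on a set `X` and a commutative
ring `K`, the coinvariants `K[X]_G` and invariants `K[X]^G` of the permutation
module `K[X]` are isomorphic as `K`-modules. -/
theorem stmt_9 (K : Type*) [CommRing K] (G : Type*) [Group G] [Fintype G]
    (X : Type*) [MulAction G X] :
    Nonempty (((X →₀ K) ⧸ Submodule.span K
        {m | ∃ (σ : G) (f : X →₀ K), m = (Representation.ofMulAction K G X σ (MonoidAlgebra.ofCoeff f)).coeff - f})
      ≃ₗ[K] (Representation.ofMulAction K G X).invariants) :=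
  ⟨(Representation.permCoinvariantsEquiv K G X).trans
    (Representation.invariantsOfMulActionEquiv K G X)⟩
end
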